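/- arXiv:1505.01766 — 2 statements merged into one kernel-verified Lean document; each statement's English description precedes it below -/
import Mathlib

section
/- The set E_X = {E(F;v) : v ∈ A*, F ⊆ A* finite} ∪ {0} is closed under multiplication, and for any word w ∈ A* and any e ∈ E_X, the element s_w* e s_w again lies in E_X. Specifically, if w = vz then s_w* E(F;v) s_w = E({w} ∪ Fz; ε), and if v = wz then s_w* E(F;v) s_w = E(F ∪ {wz}; z). -/
open Function

/-- The one-sided shift map on `ℕ → A`. -/
def shft {A : Type*} (x : ℕ → A) : ℕ → A := fun n => x (n + 1)

/-- Concatenation of a finite word `w` with an infinite word `x`. -/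
def wcat {A : Type*} (w : List A) (x : ℕ → A) : ℕ → A :=
  fun n => w.getD n (x (n - w.length))

/-- Partial bijections on `ℕ → A` modelled as relations (sets of pairs (input, output)). -/
abbrev PB (A : Type*) := Set ((ℕ → A) × (ℕ → A))

/-- Composition on the largest possible domain: `rcomp r s` applies `s` first, then `r`
(i.e. the semigroup product `r · s`). -/
def rcomp {A : Type*} (r s : PB A) : PB A := {p | ∃ y, (p.1, y) ∈ s ∧ (y, p.2) ∈ r}

/-- Inverse of a partial bijection. -/
def rinv {A : Type*} (r : PB A) : PB A := {p | (p.2, p.1) ∈ r}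

/-- The identity map on a subset `U`. -/
def idOn {A : Type*} (U : Set (ℕ → A)) : PB A := {p | p.1 ∈ U ∧ p.2 = p.1}

/-- The partial bijection `s_μ : x ↦ μx` on `{x ∈ X : μx ∈ X}`. -/
def sMap {A : Type*} (X : Set (ℕ → A)) (μ : List A) : PB A :=
  {p | p.1 ∈ X ∧ wcat μ p.1 ∈ X ∧ p.2 = wcat μ p.1}

/-- The cylinder set `C(v) = {vx : x ∈ A^ℕ} ∩ X`. -/
def Cyl {A : Type*} (X : Set (ℕ → A)) (v : List A) : Set (ℕ → A) :=
  {y | y ∈ X ∧ ∃ x, y = wcat v x}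

/-- `C(μ,ν) = {νx ∈ X : μx ∈ X}`. -/
def Cmn {A : Type*} (X : Set (ℕ → A)) (μ ν : List A) : Set (ℕ → A) :=
  {y | ∃ x, y = wcat ν x ∧ y ∈ X ∧ wcat μ x ∈ X}

/-- `C(F;v) = {vx ∈ X : fx ∈ X for all f ∈ F}`. -/
def CFv {A : Type*} (X : Set (ℕ → A)) (F : Finset (List A)) (v : List A) : Set (ℕ → A) :=
  {y | ∃ x, y = wcat v x ∧ y ∈ X ∧ ∀ f ∈ F, wcat f x ∈ X}

/-- The idempotent `E(F;v) = Id_{C(F;v)}`. -/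
def Efv {A : Type*} (X : Set (ℕ → A)) (F : Finset (List A)) (v : List A) : PB A :=
  idOn (CFv X F v)

/-- The set `E_X = {E(F;v)} ∪ {0}` of idempotents. -/
def EXset {A : Type*} (X : Set (ℕ → A)) : Set (PB A) :=
  {r | r = ∅ ∨ ∃ (F : Finset (List A)) (v : List A), r = Efv X F v}

/-- The element `s_α E(F;v) s_β^*` of `I(X)`. -/
def elt {A : Type*} (X : Set (ℕ → A)) (α : List A) (F : Finset (List A)) (v β : List A) :
    PB A :=
  rcomp (rcomp (sMap X α) (Efv X F v)) (rinv (sMap X β))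

/-- The inverse semigroup `S_X = {s_α E(F;v) s_β^*} ∪ {0}` (closed form). -/
def SXset {A : Type*} (X : Set (ℕ → A)) : Set (PB A) :=
  {r | r = ∅ ∨ ∃ (α β v : List A) (F : Finset (List A)), r = elt X α F v β}

/-- `α` and `β` are in lowest terms: they do not both end with the same letter. -/
def LowTerms {A : Type*} (α β : List A) : Prop :=
  ∀ a : A, ¬(α.getLast? = some a ∧ β.getLast? = some a)

/-- A word viewed as an element of the free group on `A`. -/
def wgrp {A : Type*} (w : List A) : FreeGroup A := (w.map FreeGroup.of).prod

/-- Natural partial order on partial bijections: `s ≤ t` iff `t s^* s = s`. -/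
def rle {A : Type*} (s t : PB A) : Prop := rcomp t (rcomp (rinv s) s) = s

/-- `P_k(x) = {μ ∈ A^k : μx ∈ X}`. -/
def Pk {A : Type*} (X : Set (ℕ → A)) (k : ℕ) (x : ℕ → A) : Set (List A) :=
  {μ | μ.length = k ∧ wcat μ x ∈ X}

/-- `l`-past equivalence: `P_r(x) = P_r(y)` for all `r ≤ l`. -/
def pastEq {A : Type*} (X : Set (ℕ → A)) (l : ℕ) (x y : ℕ → A) : Prop :=
  ∀ r ≤ l, Pk X r x = Pk X r y

/-- The relation `x ~_{(k,l)} y`. -/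
def klEq {A : Type*} (X : Set (ℕ → A)) (k l : ℕ) (x y : ℕ → A) : Prop :=
  (∀ i < k, x i = y i) ∧ pastEq X l (shft^[k] x) (shft^[k] y)


/-!
Everything reduces to the combinatorics of words. Two words `vx` and `wy` can only coincide when
one of `v`, `w` is a prefix of the other, so `C(F;v) ∩ C(G;w)` is empty unless, say, `w = vz`, and
then `vx' = vzx` forces `x' = zx`, turning the condition `fx' ∈ X` into `(fz)x ∈ X`. Conjugating
`Id_U` by `s_w` gives the identity on `{x ∈ X : wx ∈ U}`, and the same prefix analysis of `wx = vy`
identifies this set with `C({w} ∪ Fz; ε)` when `w = vz`, with `C(F ∪ {wz}; z)` when `v = wz`, and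
with `∅` otherwise.
-/

section Words

variable {A : Type*}

theorem wcat_nil (x : ℕ → A) : wcat [] x = x := by
  funext n; simp [wcat]

theorem wcat_append (a b : List A) (x : ℕ → A) :
    wcat (a ++ b) x = wcat a (wcat b x) := by
  funext n
  simp only [wcat, List.length_append]
  rcases lt_or_ge n a.length with h | h
  · rw [List.getD_eq_getElem _ _ (by simp; omega), List.getD_eq_getElem _ _ h,
      List.getElem_append_left h]
  · rw [List.getD_eq_default _ _ h]
    rcases lt_or_ge n (a.length + b.length) with h2 | h2
    · rw [List.getD_eq_getElem _ _ (by simp; omega), List.getD_eq_getElem _ _ (by omega),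
        List.getElem_append_right h]
    · rw [List.getD_eq_default _ _ (by simp; omega), List.getD_eq_default _ _ (by omega),
        Nat.sub_sub]

theorem wcat_injective (w : List A) : Injective (wcat w) := by
  intro x y h
  funext n
  have := congrFun h (n + w.length)
  simp only [wcat] at this
  rw [List.getD_eq_default _ _ (by omega), List.getD_eq_default _ _ (by omega)] at this
  simpa using this

theorem prefix_of_wcat_eq_of_length_le {v w : List A} {x y : ℕ → A}
    (hle : v.length ≤ w.length) (h : wcat v x = wcat w y) : v <+: w := by
  rw [List.prefix_iff_eq_take]
  apply List.ext_getElem (by simp; omega)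
  intro i h1 h2
  have := congrFun h i
  simp only [wcat] at this
  rw [List.getD_eq_getElem _ _ (by simpa using h1),
    List.getD_eq_getElem _ _ (by simp at h2; omega)] at this
  simp [this]

theorem prefix_or_prefix_of_wcat_eq {v w : List A} {x y : ℕ → A}
    (h : wcat v x = wcat w y) : v <+: w ∨ w <+: v := by
  rcases le_total v.length w.length with hle | hle
  · exact Or.inl (prefix_of_wcat_eq_of_length_le hle h)
  · exact Or.inr (prefix_of_wcat_eq_of_length_le hle h.symm)

end Words

section PartialBijections

variable {A : Type*}

theorem rcomp_empty_left (r : PB A) : rcomp ∅ r = ∅ := by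
  ext ⟨x, x'⟩; simp [rcomp]

theorem rcomp_empty_right (r : PB A) : rcomp r ∅ = ∅ := by
  ext ⟨x, x'⟩; simp [rcomp]

theorem idOn_empty : idOn (∅ : Set (ℕ → A)) = ∅ := by
  ext ⟨x, x'⟩; simp [idOn]

theorem idOn_rcomp_idOn (U V : Set (ℕ → A)) : rcomp (idOn U) (idOn V) = idOn (U ∩ V) := by
  ext ⟨x, x'⟩
  simp only [rcomp, idOn, Set.mem_ofPred_eq, Set.mem_inter_iff]
  constructor
  · rintro ⟨y, ⟨hV, rfl⟩, hU, rfl⟩; exact ⟨⟨hU, hV⟩, rfl⟩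
  · rintro ⟨⟨hU, hV⟩, rfl⟩; exact ⟨_, ⟨hV, rfl⟩, hU, rfl⟩

theorem sMap_conj_idOn (X : Set (ℕ → A)) (w : List A) {U : Set (ℕ → A)} (hU : U ⊆ X) :
    rcomp (rinv (sMap X w)) (rcomp (idOn U) (sMap X w)) = idOn (X ∩ wcat w ⁻¹' U) := by
  ext ⟨x, x'⟩
  simp only [rcomp, rinv, sMap, idOn, Set.mem_ofPred_eq, Set.mem_inter_iff, Set.mem_preimage]
  constructor
  · rintro ⟨y, ⟨y1, ⟨hx, -, rfl⟩, hwx, rfl⟩, -, -, hy⟩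
    obtain rfl := wcat_injective w hy
    exact ⟨⟨hx, hwx⟩, rfl⟩
  · rintro ⟨⟨hx, hwx⟩, rfl⟩
    exact ⟨_, ⟨_, ⟨hx, hU hwx, rfl⟩, hwx, rfl⟩, hx, hU hwx, rfl⟩

end PartialBijections

section Idempotents

variable {A : Type*} (X : Set (ℕ → A))

theorem CFv_subset (F : Finset (List A)) (v : List A) : CFv X F v ⊆ X := by
  rintro _ ⟨x, rfl, hX, -⟩; exact hX

theorem empty_mem_EXset : (∅ : PB A) ∈ EXset X := Or.inl rfl

theorem Efv_mem_EXset (F : Finset (List A)) (v : List A) : Efv X F v ∈ EXset X :=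
  Or.inr ⟨F, v, rfl⟩

theorem CFv_inter_CFv_eq_empty {v w : List A} (hvw : ¬ v <+: w) (hwv : ¬ w <+: v)
    (F G : Finset (List A)) : CFv X F v ∩ CFv X G w = ∅ := by
  ext y
  simp only [Set.mem_inter_iff, Set.mem_empty_iff_false, iff_false, not_and]
  rintro ⟨x, rfl, -, -⟩ ⟨x', hx', -, -⟩
  exact (prefix_or_prefix_of_wcat_eq hx').elim hvw hwv

theorem inter_preimage_wcat_CFv_eq_empty {v w : List A} (hvw : ¬ v <+: w) (hwv : ¬ w <+: v)
    (F : Finset (List A)) : X ∩ wcat w ⁻¹' CFv X F v = ∅ := by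
  ext x
  simp only [Set.mem_inter_iff, Set.mem_preimage, Set.mem_empty_iff_false, iff_false, not_and]
  rintro - ⟨y, hy, -, -⟩
  exact (prefix_or_prefix_of_wcat_eq hy).elim hwv hvw

variable [DecidableEq A]

theorem CFv_inter_CFv_append (F G : Finset (List A)) (v z : List A) :
    CFv X F v ∩ CFv X G (v ++ z) = CFv X (G ∪ F.image (· ++ z)) (v ++ z) := by
  ext y
  simp only [Set.mem_inter_iff, CFv, Set.mem_ofPred_eq]
  constructor
  · rintro ⟨⟨x, rfl, hyX, hF⟩, ⟨x', hx', -, hG⟩⟩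
    rw [wcat_append] at hx'
    obtain rfl := wcat_injective v hx'
    refine ⟨x', by rw [wcat_append], hyX, fun f hf => ?_⟩
    rcases Finset.mem_union.1 hf with hf | hf
    · exact hG f hf
    · obtain ⟨g, hg, rfl⟩ := Finset.mem_image.1 hf
      rw [wcat_append]; exact hF g hg
  · rintro ⟨x, rfl, hyX, hFG⟩
    refine ⟨⟨wcat z x, by rw [wcat_append], hyX, fun f hf => ?_⟩,
      ⟨x, rfl, hyX, fun g hg => hFG g (Finset.mem_union_left _ hg)⟩⟩
    rw [← wcat_append]
    exact hFG _ (Finset.mem_union_right _ (Finset.mem_image_of_mem _ hf))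

theorem inter_preimage_wcat_append_CFv (F : Finset (List A)) (v z : List A) :
    X ∩ wcat (v ++ z) ⁻¹' CFv X F v = CFv X (insert (v ++ z) (F.image (· ++ z))) [] := by
  ext x
  simp only [Set.mem_inter_iff, Set.mem_preimage, CFv, Set.mem_ofPred_eq, Finset.mem_insert,
    Finset.mem_image, wcat_nil, exists_eq_left']
  constructor
  · rintro ⟨hx, y, hy, hwx, hF⟩
    rw [wcat_append] at hy
    obtain rfl := wcat_injective v hy
    refine ⟨hx, ?_⟩
    rintro f (rfl | ⟨g, hg, rfl⟩)
    · exact hwx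
    · rw [wcat_append]; exact hF g hg
  · rintro ⟨hx, hF⟩
    refine ⟨hx, wcat z x, wcat_append v z x, hF _ (Or.inl rfl), fun f hf => ?_⟩
    rw [← wcat_append]; exact hF _ (Or.inr ⟨f, hf, rfl⟩)

theorem inter_preimage_wcat_CFv_append (F : Finset (List A)) (w z : List A) :
    X ∩ wcat w ⁻¹' CFv X F (w ++ z) = CFv X (insert (w ++ z) F) z := by
  ext x
  simp only [Set.mem_inter_iff, Set.mem_preimage, CFv, Set.mem_ofPred_eq, Finset.mem_insert]
  constructor
  · rintro ⟨hx, y, hy, hwx, hF⟩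
    rw [wcat_append] at hy
    obtain rfl := wcat_injective w hy
    refine ⟨y, rfl, hx, ?_⟩
    rintro f (rfl | hf)
    · rwa [wcat_append]
    · exact hF f hf
  · rintro ⟨y, rfl, hx, hF⟩
    have hwzy : wcat (w ++ z) y ∈ X := hF _ (Or.inl rfl)
    rw [wcat_append] at hwzy
    exact ⟨hx, y, (wcat_append w z y).symm, hwzy, fun f hf => hF f (Or.inr hf)⟩

theorem sMap_conj_Efv_of_prefix_left (F : Finset (List A)) (v z : List A) :
    rcomp (rinv (sMap X (v ++ z))) (rcomp (Efv X F v) (sMap X (v ++ z))) =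
      Efv X (insert (v ++ z) (F.image (· ++ z))) [] := by
  rw [Efv, sMap_conj_idOn X _ (CFv_subset X F v), inter_preimage_wcat_append_CFv, Efv]

theorem sMap_conj_Efv_of_prefix_right (F : Finset (List A)) (w z : List A) :
    rcomp (rinv (sMap X w)) (rcomp (Efv X F (w ++ z)) (sMap X w)) =
      Efv X (insert (w ++ z) F) z := by
  rw [Efv, sMap_conj_idOn X _ (CFv_subset X F _), inter_preimage_wcat_CFv_append, Efv]

theorem Efv_rcomp_Efv_mem_EXset (F G : Finset (List A)) (v w : List A) :
    rcomp (Efv X F v) (Efv X G w) ∈ EXset X := by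
  rw [Efv, Efv, idOn_rcomp_idOn]
  by_cases hvw : v <+: w
  · obtain ⟨z, rfl⟩ := hvw
    rw [CFv_inter_CFv_append]
    exact Efv_mem_EXset X _ _
  by_cases hwv : w <+: v
  · obtain ⟨z, rfl⟩ := hwv
    rw [Set.inter_comm, CFv_inter_CFv_append]
    exact Efv_mem_EXset X _ _
  rw [CFv_inter_CFv_eq_empty X hvw hwv, idOn_empty]
  exact empty_mem_EXset X

theorem sMap_conj_Efv_mem_EXset (F : Finset (List A)) (v w : List A) :
    rcomp (rinv (sMap X w)) (rcomp (Efv X F v) (sMap X w)) ∈ EXset X := by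
  by_cases hvw : v <+: w
  · obtain ⟨z, rfl⟩ := hvw
    rw [sMap_conj_Efv_of_prefix_left]
    exact Efv_mem_EXset X _ _
  by_cases hwv : w <+: v
  · obtain ⟨z, rfl⟩ := hwv
    rw [sMap_conj_Efv_of_prefix_right]
    exact Efv_mem_EXset X _ _
  rw [Efv, sMap_conj_idOn X _ (CFv_subset X F v), inter_preimage_wcat_CFv_eq_empty X hvw hwv,
    idOn_empty]
  exact empty_mem_EXset X

end Idempotents

theorem stmt3_general {A : Type*} [DecidableEq A]
    (X : Set (ℕ → A)) :
    (∀ e ∈ EXset X, ∀ f ∈ EXset X, rcomp e f ∈ EXset X) ∧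
    (∀ (w : List A), ∀ e ∈ EXset X,
        rcomp (rinv (sMap X w)) (rcomp e (sMap X w)) ∈ EXset X) ∧
    (∀ (F : Finset (List A)) (v z : List A),
        rcomp (rinv (sMap X (v ++ z))) (rcomp (Efv X F v) (sMap X (v ++ z))) =
          Efv X (insert (v ++ z) (F.image (fun f => f ++ z))) []) ∧
    (∀ (F : Finset (List A)) (w z : List A),
        rcomp (rinv (sMap X w)) (rcomp (Efv X F (w ++ z)) (sMap X w)) =
          Efv X (insert (w ++ z) F) z) := by
  refine ⟨?_, ?_, sMap_conj_Efv_of_prefix_left X, sMap_conj_Efv_of_prefix_right X⟩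
  · rintro e (rfl | ⟨F, v, rfl⟩) f hf
    · rw [rcomp_empty_left]; exact empty_mem_EXset X
    rcases hf with rfl | ⟨G, w, rfl⟩
    · rw [rcomp_empty_right]; exact empty_mem_EXset X
    exact Efv_rcomp_Efv_mem_EXset X F G v w
  · rintro w e (rfl | ⟨F, v, rfl⟩)
    · rw [rcomp_empty_left, rcomp_empty_right]; exact empty_mem_EXset X
    · exact sMap_conj_Efv_mem_EXset X F v w

theorem stmt3 {A : Type*} [Fintype A] [DecidableEq A] [TopologicalSpace A] [DiscreteTopology A]
    (X : Set (ℕ → A)) (hXcl : IsClosed X) (hXsh : ∀ x ∈ X, shft x ∈ X) :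
    (∀ e ∈ EXset X, ∀ f ∈ EXset X, rcomp e f ∈ EXset X) ∧
    (∀ (w : List A), ∀ e ∈ EXset X,
        rcomp (rinv (sMap X w)) (rcomp e (sMap X w)) ∈ EXset X) ∧
    (∀ (F : Finset (List A)) (v z : List A),
        rcomp (rinv (sMap X (v ++ z))) (rcomp (Efv X F v) (sMap X (v ++ z))) =
          Efv X (insert (v ++ z) (F.image (fun f => f ++ z))) []) ∧
    (∀ (F : Finset (List A)) (w z : List A),
        rcomp (rinv (sMap X w)) (rcomp (Efv X F (w ++ z)) (sMap X w)) =
          Efv X (insert (w ++ z) F) z) :=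
  stmt3_general X
end

section
/- If ξ ⊆ E_X is a filter on the idempotent semilattice of S_X (0 ∉ ξ, closed under products, upward closed), then there exists x ∈ X ∪ A* such that for every E(F;v) ∈ ξ, the word v is a prefix of x. -/
open Function

/-!
Every idempotent `E(F;v)` in `ξ` is nonzero, so its cylinder `C(F;v)` has a point, and that point
begins with `v`. Since `ξ` is closed under products, any two of its idempotents have a common
point, so the words `v` occurring in `ξ` form a chain for the prefix order. If their lengths are
bounded, the longest one is the required finite word. Otherwise the chain determines an infinite
sequence `x`, which lies in `X` because `X` is closed and every initial segment of `x` is an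
initial segment of a point of `X`.
-/

def List.IsPrefixOfSeq {α : Type*} (v : List α) (x : ℕ → α) : Prop :=
  ∀ i (h : i < v.length), x i = v[i]

namespace List.IsPrefixOfSeq

variable {α : Type*} {v w : List α} {x : ℕ → α}

theorem isPrefix_of_length_le (hv : v.IsPrefixOfSeq x) (hw : w.IsPrefixOfSeq x)
    (hlen : v.length ≤ w.length) : v <+: w := by
  refine List.prefix_iff_eq_take.2 (List.ext_getElem (by simp [hlen]) fun i h _ => ?_)
  simp only [List.getElem_take]
  rw [← hv i h, ← hw i]

theorem prefix_or_prefix (hv : v.IsPrefixOfSeq x) (hw : w.IsPrefixOfSeq x) :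
    v <+: w ∨ w <+: v :=
  (le_total v.length w.length).imp (hv.isPrefix_of_length_le hw) (hw.isPrefix_of_length_le hv)

end List.IsPrefixOfSeq

section PrefixChain

variable {α : Type*} {S : Set (List α)}

theorem IsChain.exists_forall_isPrefix_of_bddAbove (hS : IsChain (· <+: ·) S)
    (hbdd : BddAbove (List.length '' S)) : ∃ w : List α, ∀ v ∈ S, v <+: w := by
  rcases S.eq_empty_or_nonempty with rfl | hne
  · exact ⟨[], by simp⟩
  obtain ⟨w, hw, hwlen⟩ := Nat.sSup_mem (hne.image _) hbdd
  refine ⟨w, fun v hv => (hS.total hv hw).elim id fun hwv => ?_⟩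
  rw [hwv.eq_of_length_le (hwlen ▸ le_csSup hbdd (Set.mem_image_of_mem _ hv))]

theorem IsChain.exists_forall_isPrefixOfSeq_of_not_bddAbove (hS : IsChain (· <+: ·) S)
    (hbdd : ¬BddAbove (List.length '' S)) : ∃ x : ℕ → α, ∀ v ∈ S, v.IsPrefixOfSeq x := by
  obtain ⟨g, hg⟩ : ∃ g : ℕ → List α, ∀ n, g n ∈ S ∧ n < (g n).length := by
    simpa [not_bddAbove_iff, Classical.skolem] using hbdd
  refine ⟨fun n => (g n)[n]'(hg n).2, fun v hv i hi => ?_⟩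
  rcases hS.total hv (hg i).1 with hvg | hgv
  · exact (hvg.getElem hi).symm
  · exact hgv.getElem (hg i).2

end PrefixChain

theorem IsClosed.mem_of_forall_exists_eqOn {E : Type*} [TopologicalSpace E] {X : Set (ℕ → E)}
    (hX : IsClosed X) {x : ℕ → E} (happrox : ∀ n, ∃ y ∈ X, ∀ i < n, y i = x i) : x ∈ X := by
  choose y hyX hyx using happrox
  refine hX.mem_of_tendsto (b := Filter.atTop) (tendsto_pi_nhds.2 fun i => ?_) (.of_forall hyX)
  refine tendsto_const_nhds.congr' ?_
  filter_upwards [Filter.eventually_gt_atTop i] with n hn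
  exact (hyx n i hn).symm

theorem rcomp_idOn_idOn {A : Type*} (U V : Set (ℕ → A)) :
    rcomp (idOn U) (idOn V) = idOn (U ∩ V) := by
  ext ⟨p, q⟩
  simp only [rcomp, idOn, Set.mem_ofPred_eq, Set.mem_inter_iff]
  constructor
  · rintro ⟨y, ⟨hpV, rfl⟩, hpU, rfl⟩
    exact ⟨⟨hpU, hpV⟩, rfl⟩
  · rintro ⟨⟨hpU, hpV⟩, rfl⟩
    exact ⟨_, ⟨hpV, rfl⟩, hpU, rfl⟩

theorem idOn_nonempty_iff {A : Type*} {U : Set (ℕ → A)} : (idOn U).Nonempty ↔ U.Nonempty :=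
  ⟨fun ⟨p, hp, _⟩ => ⟨p.1, hp⟩, fun ⟨y, hy⟩ => ⟨(y, y), hy, rfl⟩⟩

theorem isPrefixOfSeq_of_mem_CFv {A : Type*} {X : Set (ℕ → A)} {F : Finset (List A)}
    {v : List A} {y : ℕ → A} (hy : y ∈ CFv X F v) : v.IsPrefixOfSeq y := by
  obtain ⟨z, rfl, -⟩ := hy
  intro i hi
  simp [wcat, List.getD, hi]

theorem stmt11_general {A : Type*} [TopologicalSpace A]
    (X : Set (ℕ → A)) (hXcl : IsClosed X)
    (ξ : Set (PB A)) (h0 : (∅ : PB A) ∉ ξ)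
    (hmul : ∀ e ∈ ξ, ∀ f ∈ ξ, rcomp e f ∈ ξ) :
    (∃ x ∈ X, ∀ (F : Finset (List A)) (v : List A), Efv X F v ∈ ξ →
        ∀ (i : ℕ) (h : i < v.length), x i = v.get ⟨i, h⟩) ∨
    (∃ w : List A, ∀ (F : Finset (List A)) (v : List A), Efv X F v ∈ ξ → v <+: w) := by
  have nonempty_of_mem : ∀ e ∈ ξ, e.Nonempty := fun e he =>
    Set.nonempty_iff_ne_empty.2 fun h => h0 (h ▸ he)
  set S : Set (List A) := {v | ∃ F, Efv X F v ∈ ξ}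
  have hchain : IsChain (· <+: ·) S := by
    rintro v ⟨F, hF⟩ w ⟨G, hG⟩ -
    have hFG := nonempty_of_mem _ (hmul _ hF _ hG)
    rw [Efv, Efv, rcomp_idOn_idOn, idOn_nonempty_iff] at hFG
    obtain ⟨y, hyv, hyw⟩ := hFG
    exact (isPrefixOfSeq_of_mem_CFv hyv).prefix_or_prefix (isPrefixOfSeq_of_mem_CFv hyw)
  by_cases hbdd : BddAbove (List.length '' S)
  · obtain ⟨w, hw⟩ := hchain.exists_forall_isPrefix_of_bddAbove hbdd
    exact .inr ⟨w, fun F v hv => hw v ⟨F, hv⟩⟩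
  obtain ⟨x, hx⟩ := hchain.exists_forall_isPrefixOfSeq_of_not_bddAbove hbdd
  refine .inl ⟨x, hXcl.mem_of_forall_exists_eqOn fun n => ?_, fun F v hv => hx v ⟨F, hv⟩⟩
  obtain ⟨_, ⟨v, ⟨F, hF⟩, rfl⟩, hnv⟩ := not_bddAbove_iff.1 hbdd n
  obtain ⟨y, hy⟩ := idOn_nonempty_iff.1 (nonempty_of_mem _ hF)
  have hyv := isPrefixOfSeq_of_mem_CFv hy
  obtain ⟨-, -, hyX, -⟩ := hy
  refine ⟨y, hyX, fun i hi => ?_⟩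
  rw [hyv i (hi.trans hnv), hx v ⟨F, hF⟩]

theorem stmt11 {A : Type*} [Fintype A] [TopologicalSpace A] [DiscreteTopology A]
    (X : Set (ℕ → A)) (hXcl : IsClosed X) (hXsh : ∀ x ∈ X, shft x ∈ X)
    (ξ : Set (PB A)) (hsub : ξ ⊆ EXset X) (h0 : (∅ : PB A) ∉ ξ)
    (hmul : ∀ e ∈ ξ, ∀ f ∈ ξ, rcomp e f ∈ ξ)
    (hup : ∀ e ∈ ξ, ∀ f ∈ EXset X, rcomp e f = e → f ∈ ξ) :
    (∃ x ∈ X, ∀ (F : Finset (List A)) (v : List A), Efv X F v ∈ ξ →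
        ∀ (i : ℕ) (h : i < v.length), x i = v.get ⟨i, h⟩) ∨
    (∃ w : List A, ∀ (F : Finset (List A)) (v : List A), Efv X F v ∈ ξ → v <+: w) :=
  stmt11_general X hXcl ξ h0 hmul
end
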